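/- arXiv:1412.0323 — 2 statements merged into one kernel-verified Lean document; each statement's English description precedes it below -/
import Mathlib

section
/- Let r ≥ 1 and s ≥ 1 be integers and let G be the graph 𝒢(0,r,s) on n = r + s + 2 vertices. Then q₁(G) + q₂(G) > d₁(G) + d₂(G) + 1, where q₁(G) ≥ q₂(G) are the two largest eigenvalues (with multiplicity) of the signless Laplacian Q(G) and d₁(G) ≥ d₂(G) are the two largest vertex degrees of G. -/
open Matrix

/-- The signless Laplacian matrix `Q(G) = D + A` of a simple graph, over `ℝ`. -/
def sLapMatrix {m : ℕ} (G : SimpleGraph (Fin m)) [DecidableRel G.Adj] :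
    Matrix (Fin m) (Fin m) ℝ :=
  G.degMatrix ℝ + G.adjMatrix ℝ

/-- `q` lists the eigenvalues of `A` (with multiplicity) in non-increasing order. -/
def IsEigSeq {m : ℕ} (A : Matrix (Fin m) (Fin m) ℝ) (q : Fin m → ℝ) : Prop :=
  Antitone q ∧ ∃ (hA : A.IsHermitian) (σ : Equiv.Perm (Fin m)),
    ∀ i, q i = hA.eigenvalues (σ i)

/-- `d` lists the degrees of `G` (with multiplicity) in non-increasing order. -/
def IsDegSeq {m : ℕ} (G : SimpleGraph (Fin m)) [DecidableRel G.Adj] (d : Fin m → ℕ) : Prop :=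
  Antitone d ∧ ∃ σ : Equiv.Perm (Fin m), ∀ i, d i = G.degree (σ i)

/-- The graph `𝒢(p,r,s)` on `p + r + s + 2` vertices: the graph `ℋ(p,r,s)` plus the
edge `{u, v} = {0, 1}`. -/
def GGraph (p r s : ℕ) : SimpleGraph (Fin (p + r + s + 2)) where
  Adj a b :=
    ((a.val = 0 ∧ b.val = 1) ∨ (b.val = 0 ∧ a.val = 1)) ∨
    (((a.val = 0 ∧ 2 ≤ b.val ∧ b.val < p + r + 2) ∨
      (a.val = 1 ∧ 2 ≤ b.val ∧ (b.val < p + 2 ∨ p + r + 2 ≤ b.val))) ∨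
     ((b.val = 0 ∧ 2 ≤ a.val ∧ a.val < p + r + 2) ∨
      (b.val = 1 ∧ 2 ≤ a.val ∧ (a.val < p + 2 ∨ p + r + 2 ≤ a.val))))
  symm := by constructor; intro a b h; tauto
  loopless := by
    constructor
    intro a h
    rcases h with (⟨h1, h2⟩ | ⟨h1, h2⟩) |
      ((⟨h1, h2, _⟩ | ⟨h1, h2, _⟩) | (⟨h1, h2, _⟩ | ⟨h1, h2, _⟩)) <;> omega

instance GGraph.adjDecidable (p r s : ℕ) : DecidableRel (GGraph p r s).Adj := fun a b =>
  inferInstanceAs (Decidable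
    (((a.val = 0 ∧ b.val = 1) ∨ (b.val = 0 ∧ a.val = 1)) ∨
     (((a.val = 0 ∧ 2 ≤ b.val ∧ b.val < p + r + 2) ∨
       (a.val = 1 ∧ 2 ≤ b.val ∧ (b.val < p + 2 ∨ p + r + 2 ≤ b.val))) ∨
      ((b.val = 0 ∧ 2 ≤ a.val ∧ a.val < p + r + 2) ∨
       (b.val = 1 ∧ 2 ≤ a.val ∧ (a.val < p + 2 ∨ p + r + 2 ≤ a.val))))))

/-!
By Ky Fan's inequality, `q₁ + q₂` is at least the sum of the Rayleigh quotients of any two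
orthogonal nonzero vectors. Put weight `r + 1 = deg u` on `u` and `1` on each vertex of `R`, and
likewise `s + 1` on `v` and `1` on `S`: these vectors have disjoint supports, and each Rayleigh
quotient is `k + 2 - (k + 1) / ((k + 1)² + k) > k + 3/2` for `k = r, s`. Every vertex other than
`u` and `v` is a leaf, so `d₁ + d₂ ≤ r + s + 2`.
-/

open Finset

open scoped InnerProductSpace

lemma sum_mul_le_add_of_le_one {ι : Type*} [Fintype ι] {μ w : ι → ℝ}
    (hw₀ : ∀ i, 0 ≤ w i) (hw₁ : ∀ i, w i ≤ 1) (hw : ∑ i, w i = 2) {i₀ i₁ : ι}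
    (h₀ : μ i₁ ≤ μ i₀) (h₁ : ∀ i ≠ i₀, μ i ≤ μ i₁) :
    ∑ i, μ i * w i ≤ μ i₀ + μ i₁ := by
  classical
  have hrest : ∑ i ∈ univ.erase i₀, μ i * w i ≤ μ i₁ * (2 - w i₀) := by
    rw [← hw, ← Finset.add_sum_erase _ _ (mem_univ i₀), add_sub_cancel_left, Finset.mul_sum]
    exact sum_le_sum fun i hi => mul_le_mul_of_nonneg_right (h₁ i (ne_of_mem_erase hi)) (hw₀ i)
  rw [← Finset.add_sum_erase _ _ (mem_univ i₀)]
  nlinarith [hw₁ i₀]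

section InnerProductSpace

variable {E ι : Type*} [NormedAddCommGroup E] [InnerProductSpace ℝ E] [Fintype ι]

lemma OrthonormalBasis.inner_map_self_eq_sum (e : OrthonormalBasis ι ℝ E) {μ : ι → ℝ}
    {T : E →ₗ[ℝ] E} (hT : ∀ i, T (e i) = μ i • e i) (x : E) :
    ⟪x, T x⟫_ℝ = ∑ i, μ i * ⟪e i, x⟫_ℝ ^ 2 := by
  have hTx : T x = ∑ i, (μ i * ⟪e i, x⟫_ℝ) • e i := by
    conv_lhs => rw [← e.sum_repr' x]
    simp only [map_sum, map_smul, hT, smul_smul, mul_comm]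
  rw [hTx, inner_sum]
  refine sum_congr rfl fun i _ => ?_
  rw [inner_smul_right, real_inner_comm]
  ring

lemma inner_sq_add_inner_sq_le {x y : E} (hx : ‖x‖ = 1) (hy : ‖y‖ = 1) (hxy : ⟪x, y⟫_ℝ = 0)
    (z : E) : ⟪x, z⟫_ℝ ^ 2 + ⟪y, z⟫_ℝ ^ 2 ≤ ‖z‖ ^ 2 := by
  have hon : Orthonormal ℝ ![x, y] := by
    rw [orthonormal_iff_ite]
    simp [Fin.forall_fin_two, hx, hy, hxy, real_inner_comm x y]
  simpa [Fin.sum_univ_two] using hon.sum_inner_products_le z (s := Finset.univ)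

lemma OrthonormalBasis.inner_map_self_add_le (e : OrthonormalBasis ι ℝ E) {μ : ι → ℝ}
    {T : E →ₗ[ℝ] E} (hT : ∀ i, T (e i) = μ i • e i) {x y : E} (hx : ‖x‖ = 1) (hy : ‖y‖ = 1)
    (hxy : ⟪x, y⟫_ℝ = 0) {i₀ i₁ : ι} (h₀ : μ i₁ ≤ μ i₀) (h₁ : ∀ i ≠ i₀, μ i ≤ μ i₁) :
    ⟪x, T x⟫_ℝ + ⟪y, T y⟫_ℝ ≤ μ i₀ + μ i₁ := by
  -- the weights `⟪e i, x⟫² + ⟪e i, y⟫²` lie in `[0, 1]` by Bessel and sum to `2` by Parseval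
  rw [e.inner_map_self_eq_sum hT, e.inner_map_self_eq_sum hT, ← sum_add_distrib]
  simp only [← mul_add]
  refine sum_mul_le_add_of_le_one (fun i => by positivity) (fun i => ?_) ?_ h₀ h₁
  · simpa [real_inner_comm, e.orthonormal.1 i] using inner_sq_add_inner_sq_le hx hy hxy (e i)
  · have hx' := e.sum_sq_norm_inner_right x
    have hy' := e.sum_sq_norm_inner_right y
    simp only [Real.norm_eq_abs, sq_abs, hx, hy] at hx' hy'
    rw [sum_add_distrib, hx', hy']
    norm_num

lemma OrthonormalBasis.inner_map_self_div_add_le (e : OrthonormalBasis ι ℝ E) {μ : ι → ℝ}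
    {T : E →ₗ[ℝ] E} (hT : ∀ i, T (e i) = μ i • e i) {x y : E} (hx : x ≠ 0) (hy : y ≠ 0)
    (hxy : ⟪x, y⟫_ℝ = 0) {i₀ i₁ : ι} (h₀ : μ i₁ ≤ μ i₀) (h₁ : ∀ i ≠ i₀, μ i ≤ μ i₁) :
    ⟪x, T x⟫_ℝ / ‖x‖ ^ 2 + ⟪y, T y⟫_ℝ / ‖y‖ ^ 2 ≤ μ i₀ + μ i₁ := by
  have hscale : ∀ z : E, ⟪z, T z⟫_ℝ / ‖z‖ ^ 2 = ⟪‖z‖⁻¹ • z, T (‖z‖⁻¹ • z)⟫_ℝ := fun z => by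
    rw [map_smul, inner_smul_left, inner_smul_right, div_eq_inv_mul]
    simp only [conj_trivial]
    ring
  rw [hscale, hscale]
  refine e.inner_map_self_add_le hT (norm_smul_inv_norm hx) (norm_smul_inv_norm hy) ?_ h₀ h₁
  rw [inner_smul_left, inner_smul_right, hxy, mul_zero, mul_zero]

end InnerProductSpace

lemma IsEigSeq.rayleigh_add_le {n : ℕ} {A : Matrix (Fin (n + 2)) (Fin (n + 2)) ℝ}
    {q : Fin (n + 2) → ℝ} (hq : IsEigSeq A q) {x y : Fin (n + 2) → ℝ} (hx : x ≠ 0)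
    (hy : y ≠ 0) (hxy : x ⬝ᵥ y = 0) :
    x ⬝ᵥ (A *ᵥ x) / (x ⬝ᵥ x) + y ⬝ᵥ (A *ᵥ y) / (y ⬝ᵥ y) ≤ q 0 + q 1 := by
  obtain ⟨hanti, hA, σ, hσ⟩ := hq
  have hT : ∀ i, toEuclideanLin A (hA.eigenvectorBasis i) =
      hA.eigenvalues i • hA.eigenvectorBasis i := fun i =>
    WithLp.ofLp_injective 2 <| by simp [Matrix.ofLp_toLpLin, hA.mulVec_eigenvectorBasis]
  have hsq : ∀ z : Fin (n + 2) → ℝ, ‖WithLp.toLp 2 z‖ ^ 2 = z ⬝ᵥ z := fun z => by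
    rw [← real_inner_self_eq_norm_sq, EuclideanSpace.inner_toLp_toLp, star_trivial]
  have h₀ : hA.eigenvalues (σ 1) ≤ hA.eigenvalues (σ 0) := by
    rw [← hσ, ← hσ]; exact hanti (Fin.zero_le 1)
  have h₁ : ∀ i ≠ σ 0, hA.eigenvalues i ≤ hA.eigenvalues (σ 1) := fun i hi => by
    rw [← σ.apply_symm_apply i, ← hσ, ← hσ]
    exact hanti (Fin.one_le_of_ne_zero fun h => hi (by rw [← h, σ.apply_symm_apply]))
  have h := hA.eigenvectorBasis.inner_map_self_div_add_le hT (x := WithLp.toLp 2 x)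
    (y := WithLp.toLp 2 y) (by simpa using hx) (by simpa using hy)
    (by simpa [EuclideanSpace.inner_toLp_toLp, dotProduct_comm] using hxy) h₀ h₁
  simpa [hsq, EuclideanSpace.inner_toLp_toLp, dotProduct_comm, ← hσ] using h

lemma IsDegSeq.add_le {n : ℕ} {G : SimpleGraph (Fin (n + 2))} [DecidableRel G.Adj]
    {d : Fin (n + 2) → ℕ} (hd : IsDegSeq G d) {c : ℕ}
    (hc : ∀ a b, a ≠ b → G.degree a + G.degree b ≤ c) : d 0 + d 1 ≤ c := by
  obtain ⟨-, σ, hσ⟩ := hd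
  rw [hσ, hσ]
  exact hc _ _ (σ.injective.ne zero_ne_one)

section Star

variable {V : Type*} [DecidableEq V]

def starVec (u : V) (L : Finset V) (a : ℝ) : V → ℝ :=
  fun i => if i = u then a else if i ∈ L then 1 else 0

variable {u : V} {L : Finset V} {a : ℝ}

lemma starVec_apply_center : starVec u L a u = a := if_pos rfl

lemma starVec_ne_zero (ha : a ≠ 0) : starVec u L a ≠ 0 :=
  fun h => ha (by simpa [starVec_apply_center] using congrFun h u)

lemma starVec_apply_of_ne {i : V} (hi : i ≠ u) : starVec u L a i = if i ∈ L then 1 else 0 :=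
  if_neg hi

lemma starVec_apply_of_mem (hu : u ∉ L) {j : V} (hj : j ∈ L) : starVec u L a j = 1 := by
  rw [starVec_apply_of_ne (ne_of_mem_of_not_mem hj hu), if_pos hj]

variable [Fintype V]

lemma starVec_dotProduct (hu : u ∉ L) (w : V → ℝ) :
    starVec u L a ⬝ᵥ w = a * w u + ∑ j ∈ L, w j := by
  have hsplit : ∀ i, starVec u L a i * w i =
      (if i = u then a * w u else 0) + (if i ∈ L then w i else 0) := fun i => by
    unfold starVec
    split_ifs <;> simp_all
  simp only [dotProduct, hsplit, sum_add_distrib, sum_ite_eq', mem_univ, if_true, sum_ite_mem,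
    univ_inter]

lemma starVec_dotProduct_self (hu : u ∉ L) : starVec u L a ⬝ᵥ starVec u L a = a ^ 2 + #L := by
  rw [starVec_dotProduct hu, starVec_apply_center,
    sum_congr rfl fun j hj => starVec_apply_of_mem hu hj, sum_const, nsmul_one, sq]

end Star

section PendantStar

variable {V : Type*} [Fintype V] (G : SimpleGraph V) [DecidableRel G.Adj]

def IsPendantAt (u : V) (L : Finset V) : Prop :=
  ∀ j ∈ L, G.neighborFinset j = {u}

variable {G} {u : V} {L : Finset V}

lemma IsPendantAt.notMem (hL : IsPendantAt G u L) : u ∉ L :=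
  fun hu => G.loopless.irrefl u <| (G.mem_neighborFinset u u).1 (hL u hu ▸ mem_singleton_self u)

lemma IsPendantAt.subset_neighborFinset (hL : IsPendantAt G u L) : L ⊆ G.neighborFinset u :=
  fun j hj => (G.mem_neighborFinset u j).2
    ((G.mem_neighborFinset j u).1 (hL j hj ▸ mem_singleton_self u)).symm

end PendantStar

section SLapMatrix

variable {m : ℕ} {G : SimpleGraph (Fin m)} [DecidableRel G.Adj] {u : Fin m} {L : Finset (Fin m)}

lemma sLapMatrix_mulVec_apply (x : Fin m → ℝ) (i : Fin m) :
    (sLapMatrix G *ᵥ x) i = G.degree i * x i + ∑ j ∈ G.neighborFinset i, x j := by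
  rw [sLapMatrix, add_mulVec, Pi.add_apply, SimpleGraph.degMatrix_mulVec_apply,
    SimpleGraph.adjMatrix_mulVec_apply]

lemma starVec_dotProduct_sLapMatrix_mulVec (hL : IsPendantAt G u L) (a : ℝ) :
    starVec u L a ⬝ᵥ (sLapMatrix G *ᵥ starVec u L a) = G.degree u * a ^ 2 + (2 * a + 1) * #L := by
  have hu := hL.notMem
  have hcentre : ∑ k ∈ G.neighborFinset u, starVec u L a k = #L := by
    rw [sum_congr rfl fun k hk =>
        starVec_apply_of_ne (G.ne_of_adj ((G.mem_neighborFinset u k).1 hk)).symm,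
      sum_boole, filter_mem_eq_inter, inter_eq_right.2 hL.subset_neighborFinset]
  have hleaf : ∀ j ∈ L, (sLapMatrix G *ᵥ starVec u L a) j = 1 + a := fun j hj => by
    rw [sLapMatrix_mulVec_apply, ← G.card_neighborFinset_eq_degree, hL j hj, card_singleton,
      sum_singleton, starVec_apply_of_mem hu hj, starVec_apply_center]
    ring
  rw [starVec_dotProduct hu, sum_congr rfl hleaf, sLapMatrix_mulVec_apply, hcentre,
    starVec_apply_center, sum_const, nsmul_eq_mul]
  ring

lemma lt_starVec_rayleigh (hL : IsPendantAt G u L)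
    (hdeg : G.degree u = #L + 1) (hk : 1 ≤ #L) :
    (#L : ℝ) + 3 / 2 < starVec u L (#L + 1) ⬝ᵥ (sLapMatrix G *ᵥ starVec u L (#L + 1)) /
      (starVec u L (#L + 1) ⬝ᵥ starVec u L (#L + 1)) := by
  have hk' : (1 : ℝ) ≤ #L := by exact_mod_cast hk
  rw [starVec_dotProduct_sLapMatrix_mulVec hL,
    starVec_dotProduct_self hL.notMem, hdeg, lt_div_iff₀ (by positivity)]
  push_cast
  nlinarith

end SLapMatrix

namespace GGraph

variable (p r s : ℕ)

-- `u = 0`, `v = 1`, and these are the sets `R` and `S`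
def leavesU : Finset (Fin (p + r + s + 2)) :=
  (Ico (p + 2) (p + r + 2)).attachFin fun k hk => by rw [mem_Ico] at hk; omega

def leavesV : Finset (Fin (p + r + s + 2)) :=
  (Ico (p + r + 2) (p + r + s + 2)).attachFin fun k hk => by rw [mem_Ico] at hk; omega

lemma card_leavesU : #(leavesU p r s) = r := by simp [leavesU]

lemma card_leavesV : #(leavesV p r s) = s := by simp [leavesV]

variable {p r s}

lemma isPendantAt_leavesU : IsPendantAt (GGraph p r s) 0 (leavesU p r s) := by
  intro j hj
  simp only [leavesU, mem_attachFin, mem_Ico] at hj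
  ext k
  rw [SimpleGraph.mem_neighborFinset]
  simp only [mem_singleton, Fin.ext_iff, GGraph, Fin.val_zero]
  constructor <;> intro h <;> omega

lemma isPendantAt_leavesV : IsPendantAt (GGraph p r s) 1 (leavesV p r s) := by
  intro j hj
  simp only [leavesV, mem_attachFin, mem_Ico] at hj
  ext k
  rw [SimpleGraph.mem_neighborFinset]
  simp only [mem_singleton, Fin.ext_iff, GGraph, Fin.val_one]
  constructor <;> intro h <;> omega

lemma neighborFinset_zero : (GGraph 0 r s).neighborFinset 0 = insert 1 (leavesU 0 r s) := by
  ext k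
  rw [SimpleGraph.mem_neighborFinset]
  simp only [mem_insert, leavesU, mem_attachFin, mem_Ico,
    Fin.ext_iff, GGraph, Fin.val_zero, Fin.val_one, true_and]
  constructor <;> intro h <;> omega

lemma neighborFinset_one : (GGraph 0 r s).neighborFinset 1 = insert 0 (leavesV 0 r s) := by
  ext k
  rw [SimpleGraph.mem_neighborFinset]
  simp only [mem_insert, leavesV, mem_attachFin, mem_Ico,
    Fin.ext_iff, GGraph, Fin.val_zero, Fin.val_one, true_and, and_true]
  constructor <;> intro h <;> omega

lemma degree_zero : (GGraph 0 r s).degree 0 = r + 1 := by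
  rw [← SimpleGraph.card_neighborFinset_eq_degree, neighborFinset_zero,
    card_insert_of_notMem (by simp [leavesU]), card_leavesU]

lemma degree_one : (GGraph 0 r s).degree 1 = s + 1 := by
  rw [← SimpleGraph.card_neighborFinset_eq_degree, neighborFinset_one,
    card_insert_of_notMem (by simp [leavesV]), card_leavesV]

lemma degree_of_two_le {a : Fin (0 + r + s + 2)} (ha : 2 ≤ a.val) :
    (GGraph 0 r s).degree a = 1 := by
  rw [← SimpleGraph.card_neighborFinset_eq_degree]
  by_cases hu : a.val < r + 2
  · rw [isPendantAt_leavesU a (by simp [leavesU]; omega), card_singleton]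
  · rw [isPendantAt_leavesV a (by simp [leavesV]; omega), card_singleton]

lemma degree_add_degree_le {a b : Fin (0 + r + s + 2)} (hab : a ≠ b) :
    (GGraph 0 r s).degree a + (GGraph 0 r s).degree b ≤ r + s + 2 := by
  have hdeg : ∀ c : Fin (0 + r + s + 2),
      (GGraph 0 r s).degree c = if c.val = 0 then r + 1 else if c.val = 1 then s + 1 else 1 := by
    intro c
    split_ifs with h₀ h₁
    · rw [show c = 0 from Fin.ext h₀, degree_zero]
    · rw [show c = 1 from Fin.ext h₁, degree_one]
    · exact degree_of_two_le (by omega)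
  rw [hdeg, hdeg]
  have := Fin.val_ne_of_ne hab
  split_ifs <;> omega

lemma starVec_leavesU_dotProduct_starVec_leavesV (a b : ℝ) :
    starVec 0 (leavesU p r s) a ⬝ᵥ starVec 1 (leavesV p r s) b = 0 := by
  rw [starVec_dotProduct (by simp [leavesU]), starVec_apply_of_ne zero_ne_one,
    if_neg (by simp [leavesV]), mul_zero, zero_add]
  refine sum_eq_zero fun j hj => ?_
  simp only [leavesU, mem_attachFin, mem_Ico] at hj
  rw [starVec_apply_of_ne (by rw [Fin.ne_iff_vne, Fin.val_one]; omega),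
    if_neg (by simp [leavesV]; omega)]

end GGraph

theorem GGraph_p_zero_sum_two_largest_gt {r s : ℕ} (hr : 1 ≤ r) (hs : 1 ≤ s)
    (q : Fin (0 + r + s + 2) → ℝ) (hq : IsEigSeq (sLapMatrix (GGraph 0 r s)) q)
    (d : Fin (0 + r + s + 2) → ℕ) (hd : IsDegSeq (GGraph 0 r s) d) :
    q ⟨0, by omega⟩ + q ⟨1, by omega⟩ >
      (d ⟨0, by omega⟩ : ℝ) + (d ⟨1, by omega⟩ : ℝ) + 1 := by
  have hx := lt_starVec_rayleigh GGraph.isPendantAt_leavesU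
    (by rw [GGraph.degree_zero, GGraph.card_leavesU])
    (hr.trans_eq (GGraph.card_leavesU 0 r s).symm)
  have hy := lt_starVec_rayleigh GGraph.isPendantAt_leavesV
    (by rw [GGraph.degree_one, GGraph.card_leavesV])
    (hs.trans_eq (GGraph.card_leavesV 0 r s).symm)
  rw [GGraph.card_leavesU] at hx
  rw [GGraph.card_leavesV] at hy
  have hq₀₁ := hq.rayleigh_add_le (starVec_ne_zero (by positivity))
    (starVec_ne_zero (by positivity))
    (GGraph.starVec_leavesU_dotProduct_starVec_leavesV (r + 1) (s + 1))
  have hd₀₁ : ((d 0 + d 1 : ℕ) : ℝ) ≤ r + s + 2 := by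
    exact_mod_cast hd.add_le fun _ _ => GGraph.degree_add_degree_le
  push_cast at hd₀₁
  show q 0 + q 1 > (d 0 : ℝ) + d 1 + 1
  linarith
end

section
/- Let p ≥ 2 and r ≥ 1 be integers and let G be the graph 𝒢(p,r,r) on n = p + 2r + 2 vertices. Then q₁(G) > d₁(G) + 2, where q₁(G) is the largest eigenvalue of the signless Laplacian Q(G) and d₁(G) is the maximum degree of G (here d₁(G) = p + r + 1). -/
open Matrix

/-! Test the Rayleigh quotient of `Q` with the vector `x` that is `p + r + 1` on `u` and `v`,
`2` on `P` and `1` on `R ∪ S`. Then `‖x‖² = 2 (p + r + 1)² + 4 p + 2 r` and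
`xᵀ Q x = ∑_{ab ∈ E} (x_a + x_b)² = 4 (p + r + 1)² + 2 p (p + r + 3)² + 2 r (p + r + 2)²`,
which exceeds `(p + r + 3) ‖x‖²` by `2 ((p - 1) (p + r + 1) - r) > 0` when `p ≥ 2`.
Since no degree exceeds `p + r + 1`, `q₁ ≥ xᵀ Q x / ‖x‖² > d₁ + 2`. Both sums are evaluated
class by class, adjacency and `x` depending only on which of `u, v, P, R, S` a vertex lies in. -/

open Finset

theorem Matrix.IsHermitian.dotProduct_mulVec_le_of_eigenvalues_le {n : Type*} [Fintype n]
    [DecidableEq n] {A : Matrix n n ℝ} (hA : A.IsHermitian) {c : ℝ}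
    (hc : ∀ i, hA.eigenvalues i ≤ c) (x : n → ℝ) : x ⬝ᵥ (A *ᵥ x) ≤ c * (x ⬝ᵥ x) := by
  have hB : (algebraMap ℝ (Matrix n n ℝ) c - A).IsHermitian :=
    (isHermitian_diagonal fun _ ↦ c).sub hA
  have hpsd : (algebraMap ℝ (Matrix n n ℝ) c - A).PosSemidef := by
    refine hB.posSemidef_iff_eigenvalues_nonneg.mpr fun i ↦ ?_
    have hi := hB.eigenvalues_mem_spectrum_real i
    rw [← spectrum.singleton_sub_eq, hA.spectrum_real_eq_range_eigenvalues] at hi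
    obtain ⟨_, rfl, _, ⟨j, rfl⟩, h⟩ := hi
    simpa [← h] using hc j
  simpa [Algebra.algebraMap_eq_smul_one, sub_mulVec, smul_mulVec] using
    hpsd.dotProduct_mulVec_nonneg x

theorem IsEigSeq.dotProduct_mulVec_le {m : ℕ} {A : Matrix (Fin m) (Fin m) ℝ} {q : Fin m → ℝ}
    (hq : IsEigSeq A q) (hm : 0 < m) (x : Fin m → ℝ) :
    x ⬝ᵥ (A *ᵥ x) ≤ q ⟨0, hm⟩ * (x ⬝ᵥ x) := by
  obtain ⟨hanti, hA, σ, hσ⟩ := hq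
  refine hA.dotProduct_mulVec_le_of_eigenvalues_le (fun i ↦ ?_) x
  simpa [hσ] using hanti (show (⟨0, hm⟩ : Fin m) ≤ σ.symm i from Nat.zero_le _)

theorem dotProduct_sLapMatrix_mulVec {m : ℕ} (G : SimpleGraph (Fin m)) [DecidableRel G.Adj]
    (x : Fin m → ℝ) :
    x ⬝ᵥ (sLapMatrix G *ᵥ x) = ∑ i, ∑ j, if G.Adj i j then x i * (x i + x j) else 0 := by
  simp [dotProduct, sLapMatrix, add_mulVec, SimpleGraph.degMatrix_mulVec_apply,
    SimpleGraph.adjMatrix_mulVec_apply, ← sum_filter, sum_add_distrib, mul_add, mul_sum,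
    SimpleGraph.degree, SimpleGraph.neighborFinset_eq_filter, mul_left_comm]

namespace GGraph

def AdjNat (p r a b : ℕ) : Prop :=
  ((a = 0 ∧ b = 1) ∨ (b = 0 ∧ a = 1)) ∨
    (((a = 0 ∧ 2 ≤ b ∧ b < p + r + 2) ∨ (a = 1 ∧ 2 ≤ b ∧ (b < p + 2 ∨ p + r + 2 ≤ b))) ∨
     ((b = 0 ∧ 2 ≤ a ∧ a < p + r + 2) ∨ (b = 1 ∧ 2 ≤ a ∧ (a < p + 2 ∨ p + r + 2 ≤ a))))

instance (p r : ℕ) : DecidableRel (AdjNat p r) := fun a b ↦ by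
  unfold AdjNat; infer_instance

/-- The representative of the class of `a` among `{u} = {0}`, `{v} = {1}`, `P = [2, p + 2)`,
`R = [p + 2, p + r + 2)` and `S = [p + r + 2, ∞)`. -/
def classRep (p r a : ℕ) : ℕ :=
  if a < 2 then a else if a < p + 2 then 2 else if a < p + r + 2 then p + 2 else p + r + 2

variable {p r s : ℕ}

theorem adj_iff_adjNat {a b : Fin (p + r + s + 2)} : (GGraph p r s).Adj a b ↔ AdjNat p r a b :=
  Iff.rfl

theorem adjNat_classRep_left {a b : ℕ} : AdjNat p r (classRep p r a) b ↔ AdjNat p r a b := by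
  unfold AdjNat classRep; split_ifs <;> simp only [false_and, false_or] <;> omega

theorem adjNat_classRep_right {a b : ℕ} : AdjNat p r a (classRep p r b) ↔ AdjNat p r a b := by
  unfold AdjNat classRep; split_ifs <;> simp only [false_and, false_or, or_false] <;> omega

theorem sum_range_eq_of_classRep {M : Type*} [AddCommMonoid M] {F : ℕ → M}
    (hF : ∀ k, F (classRep p r k) = F k) :
    ∑ k ∈ range (p + r + s + 2), F k =
      F 0 + F 1 + p • F 2 + r • F (p + 2) + s • F (p + r + 2) := by
  have hblock : ∀ a b c, (∀ k < b, classRep p r (a + k) = c) →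
      ∑ k ∈ range b, F (a + k) = b • F c := by
    intro a b c h
    rw [sum_congr rfl fun k hk ↦ by rw [← hF, h k (mem_range.mp hk)], sum_const, card_range]
  rw [show p + r + s + 2 = 2 + p + r + s by ring, sum_range_add, sum_range_add, sum_range_add,
    hblock _ _ 2 ?_, hblock _ _ (p + 2) ?_, hblock _ _ (p + r + 2) ?_]
  · simp [sum_range_succ, add_assoc]
  all_goals intro k hk; unfold classRep; split_ifs <;> omega

theorem degree_le (v : Fin (p + r + r + 2)) : (GGraph p r r).degree v ≤ p + r + 1 := by
  rw [← SimpleGraph.card_neighborFinset_eq_degree, SimpleGraph.neighborFinset_eq_filter,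
    card_filter]
  simp only [adj_iff_adjNat]
  rw [Fin.sum_univ_eq_sum_range (fun k ↦ if AdjNat p r v k then 1 else 0),
    sum_range_eq_of_classRep fun k ↦ by simp only [adjNat_classRep_right]]
  obtain ⟨a, ha⟩ := v
  simp only [AdjNat, smul_eq_mul]
  split_ifs <;>
    simp only [true_and, and_true, false_and, and_false, false_or, or_false] at * <;> omega

def testVec (p r a : ℕ) : ℝ := if a < 2 then p + r + 1 else if a < p + 2 then 2 else 1

theorem testVec_classRep (a : ℕ) : testVec p r (classRep p r a) = testVec p r a := by
  unfold testVec classRep; split_ifs <;> first | rfl | omega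

theorem dotProduct_testVec :
    (fun i : Fin (p + r + r + 2) ↦ testVec p r i) ⬝ᵥ (fun i ↦ testVec p r i) =
      2 * ((p : ℝ) + r + 1) ^ 2 + 4 * p + 2 * r := by
  rw [dotProduct, Fin.sum_univ_eq_sum_range (fun a ↦ testVec p r a * testVec p r a),
    sum_range_eq_of_classRep fun a ↦ by rw [testVec_classRep]]
  rcases eq_or_ne p 0 with rfl | hp <;> simp [testVec, Nat.pos_iff_ne_zero, *] <;> ring

theorem dotProduct_sLapMatrix_mulVec_testVec :
    (fun i : Fin (p + r + r + 2) ↦ testVec p r i) ⬝ᵥ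
        (sLapMatrix (GGraph p r r) *ᵥ fun i ↦ testVec p r i) =
      4 * ((p : ℝ) + r + 1) ^ 2 + 2 * p * ((p : ℝ) + r + 3) ^ 2 +
        2 * r * ((p : ℝ) + r + 2) ^ 2 := by
  rw [dotProduct_sLapMatrix_mulVec]
  simp only [adj_iff_adjNat]
  rw [Fin.sum_univ_eq_sum_range (fun a ↦ ∑ j : Fin (p + r + r + 2),
      if AdjNat p r a j then testVec p r a * (testVec p r a + testVec p r j) else 0),
    sum_congr rfl fun a _ ↦ Fin.sum_univ_eq_sum_range (fun b ↦
      if AdjNat p r a b then testVec p r a * (testVec p r a + testVec p r b) else 0) _,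
    sum_congr rfl fun a _ ↦ sum_range_eq_of_classRep fun b ↦ by
      simp only [adjNat_classRep_right, testVec_classRep],
    sum_range_eq_of_classRep fun a ↦ by simp only [adjNat_classRep_left, testVec_classRep]]
  rcases eq_or_ne p 0 with rfl | hp <;> rcases eq_or_ne r 0 with rfl | hr <;>
    simp [AdjNat, testVec, Nat.pos_iff_ne_zero, *] <;> ring

end GGraph

theorem GGraph_p_r_r_q_one_gt {p r : ℕ} (hp : 2 ≤ p)
    (q : Fin (p + r + r + 2) → ℝ) (hq : IsEigSeq (sLapMatrix (GGraph p r r)) q)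
    (d : Fin (p + r + r + 2) → ℕ) (hd : IsDegSeq (GGraph p r r) d) :
    q ⟨0, by omega⟩ > (d ⟨0, by omega⟩ : ℝ) + 2 := by
  have hrayleigh := hq.dotProduct_mulVec_le (by omega) fun i ↦ GGraph.testVec p r i
  rw [GGraph.dotProduct_sLapMatrix_mulVec_testVec, GGraph.dotProduct_testVec] at hrayleigh
  have hd₀ : (d ⟨0, by omega⟩ : ℝ) ≤ p + r + 1 := by
    obtain ⟨-, σ, hσ⟩ := hd
    exact_mod_cast hσ _ ▸ GGraph.degree_le _
  have hp' : (2 : ℝ) ≤ p := by exact_mod_cast hp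
  nlinarith [mul_nonneg (sub_nonneg.mpr hp') (r.cast_nonneg : (0 : ℝ) ≤ r)]
end
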